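/- Let n ≥ 2 and m ≥ 1 be natural numbers and let (v_{ij})_{i ∈ Fin n, j ∈ Fin m} be i.i.d. random variables with law ER. For each bidder i let M_i := max_{j} v_{ij}, and let v_{(2),(1)} denote the second-largest value among M₁, …, M_n. Then n·m − n·(m−1)/(n−1) ≤ E[v_{(2),(1)}] ≤ n·m. -/

import Mathlib

open MeasureTheory ProbabilityTheory

/-- The (untruncated) equal revenue distribution: density `x⁻²` on `[1, ∞)` with respect to
Lebesgue measure (CDF `F(x) = 1 − 1/x` for `x ≥ 1`). -/
noncomputable def ER : Measure ℝ :=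
  volume.withDensity fun x => ENNReal.ofReal (if 1 ≤ x then 1 / x ^ 2 else 0)

/-- The second-largest value of a finite family `v : Fin N → ℝ` (the maximum after removing
one maximal element); it equals the largest value of `min (v i) (v j)` over pairs `i ≠ j`. -/
noncomputable def secondMax {N : ℕ} (v : Fin N → ℝ) : ℝ :=
  sSup {x : ℝ | ∃ i j : Fin N, i ≠ j ∧ x = min (v i) (v j)}


open Set ENNReal Filter


lemma ae_ne_one : ∀ᵐ (y : ℝ), y ≠ 1 := by
  rw [ae_iff]
  simpa using Real.volume_singleton (a := 1)

lemma ER_Iic_of_le {x : ℝ} (hx : x ≤ 1) : ER (Set.Iic x) = 0 := by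
  rw [ER, withDensity_apply _ measurableSet_Iic]
  rw [setLIntegral_congr_fun_ae measurableSet_Iic (f := fun y => ENNReal.ofReal (if 1 ≤ y then 1 / y ^ 2 else 0)) (g := fun _ => (0:ℝ≥0∞))]
  · simp
  · filter_upwards [ae_ne_one] with y hy1 hy
    have : ¬ (1 ≤ y) := fun h => hy1 (le_antisymm (le_trans hy hx) h)
    simp [this]

lemma ER_Iic {x : ℝ} (hx : 1 ≤ x) : ER (Set.Iic x) = ENNReal.ofReal (1 - 1/x) := by
  rw [ER, withDensity_apply _ measurableSet_Iic]
  have hsplit : Set.Iic x = Set.Iio 1 ∪ Set.Icc 1 x := by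
    ext y; simp only [Set.mem_Iic, Set.mem_union, Set.mem_Iio, Set.mem_Icc]
    constructor
    · intro h; rcases lt_or_ge y 1 with h1 | h1
      · exact Or.inl h1
      · exact Or.inr ⟨h1, h⟩
    · rintro (h | ⟨_, h⟩)
      · linarith
      · exact h
  rw [hsplit, lintegral_union measurableSet_Icc (by
    rw [Set.disjoint_left]; intro y hy hy2; exact absurd hy2.1 (not_le.2 hy))]
  have hIoc : IntegrableOn (fun y : ℝ => 1 / y ^ 2) (Set.Ioc 1 x) volume := by
    have : IntervalIntegrable (fun y : ℝ => y ^ (-2 : ℤ)) volume 1 x := by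
      apply intervalIntegral.intervalIntegrable_zpow
      refine Or.inr ?_
      rw [Set.uIcc_of_le hx]
      intro h
      exact absurd (Set.mem_Icc.1 h).1 (by norm_num)
    rw [intervalIntegrable_iff_integrableOn_Ioc_of_le hx] at this
    apply this.congr_fun ?_ measurableSet_Ioc
    intro y _
    show y ^ (-2:ℤ) = 1 / y ^ 2
    rw [zpow_neg, one_div]
    norm_cast
  have h1 : ∫⁻ y in Set.Iio 1, ENNReal.ofReal (if 1 ≤ y then 1 / y ^ 2 else 0) = 0 := by
    rw [setLIntegral_congr_fun_ae measurableSet_Iio (g := fun _ => (0:ℝ≥0∞))]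
    · simp
    · filter_upwards with y hy
      simp [not_le.2 (Set.mem_Iio.1 hy)]
  have h2 : ∫⁻ y in Set.Icc 1 x, ENNReal.ofReal (if 1 ≤ y then 1 / y ^ 2 else 0)
      = ENNReal.ofReal (1 - 1/x) := by
    rw [setLIntegral_congr_fun_ae measurableSet_Icc
      (g := fun y => ENNReal.ofReal (1 / y ^ 2))]
    · rw [← ofReal_integral_eq_lintegral_ofReal]
      · congr 1
        have hIcc : ∫ y in Set.Icc 1 x, 1 / y ^ 2 = ∫ y in (1:ℝ)..x, 1 / y ^ 2 := by
          rw [intervalIntegral.integral_of_le hx, ← integral_Icc_eq_integral_Ioc]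
        rw [hIcc]
        have hz : (0:ℝ) ∉ Set.uIcc 1 x := by
          rw [Set.uIcc_of_le hx]
          intro h
          exact absurd (Set.mem_Icc.1 h).1 (by norm_num)
        have hzp := integral_zpow (n := (-2 : ℤ)) (a := (1:ℝ)) (b := x) (Or.inr ⟨by norm_num, hz⟩)
        have heq : ∀ y : ℝ, (1:ℝ)/y^2 = y ^ (-2:ℤ) := by
          intro y; rw [zpow_neg, one_div]; norm_cast
        simp_rw [heq]
        rw [hzp]
        norm_num
        ring
      · exact (integrableOn_Icc_iff_integrableOn_Ioc).2 hIoc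
      · filter_upwards with y
        positivity
    · filter_upwards with y hy
      simp [hy.1]
  rw [h1, h2, zero_add]


lemma offDiag_nonempty {N : ℕ} (hN : 2 ≤ N) :
    (Finset.univ.offDiag : Finset (Fin N × Fin N)).Nonempty := by
  refine ⟨(⟨0, by omega⟩, ⟨1, by omega⟩), Finset.mem_offDiag.2 ⟨Finset.mem_univ _, Finset.mem_univ _, ?_⟩⟩
  intro h
  have := congrArg Fin.val h
  simp at this

lemma secondMax_eq_sup' {N : ℕ} (hN : 2 ≤ N) (v : Fin N → ℝ) :
    secondMax v = Finset.univ.offDiag.sup' (offDiag_nonempty hN)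
      (fun p => min (v p.1) (v p.2)) := by
  rw [Finset.sup'_eq_csSup_image, secondMax]
  congr 1
  ext x
  simp only [Set.mem_setOf_eq, Set.mem_image, Finset.mem_coe, Finset.mem_offDiag,
    Finset.mem_univ, true_and]
  constructor
  · rintro ⟨i, j, hij, rfl⟩
    exact ⟨(i, j), hij, rfl⟩
  · rintro ⟨⟨i, j⟩, hij, rfl⟩
    exact ⟨i, j, hij, rfl⟩

lemma le_secondMax {N : ℕ} (hN : 2 ≤ N) (v : Fin N → ℝ) {i j : Fin N} (hij : i ≠ j) :
    min (v i) (v j) ≤ secondMax v := by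
  rw [secondMax_eq_sup' hN]
  exact Finset.le_sup' (f := fun p : Fin N × Fin N => min (v p.1) (v p.2)) (b := (i, j)) (Finset.mem_offDiag.2 ⟨Finset.mem_univ _, Finset.mem_univ _, hij⟩)

lemma secondMax_le_iff {N : ℕ} (hN : 2 ≤ N) (v : Fin N → ℝ) (x : ℝ) :
    secondMax v ≤ x ↔ ∃ i, ∀ j, j ≠ i → v j ≤ x := by
  rw [secondMax_eq_sup' hN, Finset.sup'_le_iff]
  constructor
  · intro h
    by_contra hc
    push_neg at hc
    obtain ⟨j₁, hj₁ne, hj₁⟩ := hc ⟨0, by omega⟩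
    obtain ⟨j₂, hj₂ne, hj₂⟩ := hc j₁
    have := h (j₂, j₁) (Finset.mem_offDiag.2 ⟨Finset.mem_univ _, Finset.mem_univ _, hj₂ne⟩)
    simp only [lt_min_iff] at this
    exact absurd this (not_le.2 (lt_min hj₂ hj₁))
  · rintro ⟨i, hi⟩ p hp
    obtain ⟨-, -, hne⟩ := Finset.mem_offDiag.1 hp
    rcases eq_or_ne p.1 i with h1 | h1
    · exact le_trans (min_le_right _ _) (hi p.2 (fun h2 => hne (h1.trans h2.symm)))
    · exact le_trans (min_le_left _ _) (hi p.1 h1)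

lemma measurable_sup' {Ω ι : Type*} [MeasurableSpace Ω] (s : Finset ι) (hs : s.Nonempty)
    (f : ι → Ω → ℝ) (hf : ∀ i, Measurable (f i)) :
    Measurable fun ω => s.sup' hs (fun i => f i ω) := by
  induction hs using Finset.Nonempty.cons_induction with
  | singleton i => simpa using hf i
  | cons a s ha hs ih =>
    simp only [Finset.sup'_cons hs]
    exact (hf a).max ih
open MeasureTheory Set Finset Filter

lemma integrableOn_psi (j : ℕ) :
    IntegrableOn (fun t : ℝ => (1 - t⁻¹) ^ j * (t ^ 2)⁻¹) (Set.Ioi 1) volume := by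
  have hbase : IntegrableOn (fun t : ℝ => (t ^ 2)⁻¹) (Set.Ioi 1) volume := by
    have := integrableOn_Ioi_rpow_of_lt (a := (-2 : ℝ)) (by norm_num) (c := 1) one_pos
    apply this.congr_fun ?_ measurableSet_Ioi
    intro t ht
    show t ^ (-2:ℝ) = (t ^ 2)⁻¹
    rw [Real.rpow_neg (le_of_lt (lt_trans one_pos ht)), ← Real.rpow_natCast t 2]
    norm_num
  apply hbase.mono' ?_ ?_
  · apply ContinuousOn.aestronglyMeasurable ?_ measurableSet_Ioi
    intro t ht
    have htne : t ≠ 0 := ne_of_gt (lt_trans one_pos ht)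
    exact (((continuousAt_const.sub (continuousAt_inv₀ htne)).pow j).mul
      (ContinuousAt.inv₀ (continuous_pow 2).continuousAt (pow_ne_zero _ htne))).continuousWithinAt
  · filter_upwards [ae_restrict_mem measurableSet_Ioi] with t ht
    have ht1 : (1:ℝ) < t := ht
    have h0 : (0:ℝ) ≤ 1 - t⁻¹ := by
      have : t⁻¹ ≤ 1 := by rw [inv_le_one_iff₀]; right; exact le_of_lt ht1
      linarith
    have h1 : 1 - t⁻¹ ≤ 1 := by
      have : 0 < t⁻¹ := inv_pos.2 (lt_trans one_pos ht1)
      linarith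
    have hp : (0:ℝ) < (t ^ 2)⁻¹ := by positivity
    rw [Real.norm_eq_abs, abs_of_nonneg (by positivity)]
    calc (1 - t⁻¹) ^ j * (t ^ 2)⁻¹ ≤ 1 * (t ^ 2)⁻¹ := by
          apply mul_le_mul_of_nonneg_right (pow_le_one₀ h0 h1) (le_of_lt hp)
      _ = (t ^ 2)⁻¹ := one_mul _

lemma integral_psi (j : ℕ) :
    ∫ t in Set.Ioi (1:ℝ), (1 - t⁻¹) ^ j * (t ^ 2)⁻¹ = ((j:ℝ) + 1)⁻¹ := by
  have hne : ((j:ℝ) + 1) ≠ 0 := by positivity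
  have := integral_Ioi_of_hasDerivAt_of_tendsto
    (f := fun t : ℝ => (1 - t⁻¹) ^ (j + 1) / ((j:ℝ) + 1))
    (f' := fun t : ℝ => (1 - t⁻¹) ^ j * (t ^ 2)⁻¹) (a := 1) (m := ((j:ℝ)+1)⁻¹)
    ?_ ?_ (integrableOn_psi j) ?_
  · rw [this]; norm_num
  · apply ContinuousAt.continuousWithinAt
    exact ((continuousAt_const.sub (continuousAt_inv₀ one_ne_zero)).pow _).div_const _
  · intro x hx
    have hxne : x ≠ 0 := ne_of_gt (lt_trans one_pos hx)
    have h1 : HasDerivAt (fun t : ℝ => 1 - t⁻¹) ((x ^ 2)⁻¹) x := by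
      simpa using (hasDerivAt_inv hxne).const_sub 1
    have h2 := (h1.pow (j + 1)).div_const ((j:ℝ) + 1)
    convert h2 using 1
    · rfl
    · rfl
    · simp only [Nat.add_sub_cancel]; push_cast; field_simp
  · have h1 : Tendsto (fun t : ℝ => 1 - t⁻¹) atTop (nhds 1) := by
      have := (tendsto_inv_atTop_zero (𝕜 := ℝ)).const_sub 1
      simpa using this
    have := ((h1.pow (j + 1)).div_const ((j:ℝ) + 1))
    simpa using this


noncomputable def Hsum (K : ℕ) : ℝ := ∑ j ∈ Finset.range K, ((j:ℝ) + 1)⁻¹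

lemma sum_Hsum (K : ℕ) : ∑ j ∈ Finset.range K, Hsum j = K * Hsum K - K := by
  induction K with
  | zero => simp
  | succ K ih =>
    rw [Finset.sum_range_succ, ih]
    have hH : Hsum (K + 1) = Hsum K + ((K:ℝ) + 1)⁻¹ := by
      rw [Hsum, Finset.sum_range_succ]; rfl
    rw [hH]
    have : ((K:ℝ) + 1) ≠ 0 := by positivity
    push_cast
    field_simp
    ring

lemma Hsum_diff (a m : ℕ) : Hsum (a + m) - Hsum a = ∑ k ∈ Finset.range m, (((a:ℝ) + k) + 1)⁻¹ := by
  induction m with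
  | zero => simp
  | succ m ih =>
    rw [Finset.sum_range_succ, ← ih, show a + (m + 1) = (a + m) + 1 from rfl, Hsum,
      Finset.sum_range_succ, ← Hsum]
    push_cast
    ring

lemma sum_range_split (f : ℕ → ℝ) (a m : ℕ) :
    ∑ k ∈ Finset.range (a + m), f k
      = ∑ k ∈ Finset.range a, f k + ∑ k ∈ Finset.range m, f (a + k) := by
  induction m with
  | zero => simp
  | succ m ih => rw [show a + (m+1) = (a+m)+1 from rfl, Finset.sum_range_succ,
      Finset.sum_range_succ, ih]; ring

lemma arith_bounds (b m : ℕ) (hb : 1 ≤ b) (hm : 1 ≤ m) :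
    ((b:ℝ)+1) * m - ((b:ℝ)+1) * ((m:ℝ)-1) / b
        ≤ 1 + ((b:ℝ) * ∑ k ∈ Finset.range m, Hsum (b*m + k)
            - ∑ k ∈ Finset.range (b*m), Hsum k) ∧
      1 + ((b:ℝ) * ∑ k ∈ Finset.range m, Hsum (b*m + k)
            - ∑ k ∈ Finset.range (b*m), Hsum k) ≤ ((b:ℝ)+1) * m := by
  set a : ℕ := b * m with ha
  have hB : (1:ℝ) ≤ b := by exact_mod_cast hb
  have hM : (1:ℝ) ≤ m := by exact_mod_cast hm
  have hB0 : (0:ℝ) < b := by linarith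
  have hA : ((a:ℕ) : ℝ) = (b:ℝ) * m := by push_cast [ha]; ring
  -- rewrite D
  have hsplit := sum_range_split Hsum a m
  have hD : (b:ℝ) * ∑ k ∈ Finset.range m, Hsum (a + k) - ∑ k ∈ Finset.range a, Hsum k
      = ((b:ℝ)+1) * a * ∑ k ∈ Finset.range m, (((a:ℝ) + k) + 1)⁻¹ := by
    have h1 : ∑ k ∈ Finset.range m, Hsum (a + k)
        = (↑(a+m) : ℝ) * Hsum (a+m) - (↑(a+m):ℝ) - ((a:ℝ) * Hsum a - a) := by
      have := sum_Hsum (a + m)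
      rw [hsplit, sum_Hsum a] at this
      linarith
    rw [h1, sum_Hsum a, ← Hsum_diff a m]
    have hc : (↑(a+m) : ℝ) = (a:ℝ) + m := by push_cast; ring
    rw [hc, hA]
    ring
  rw [hD]
  set Sm := ∑ k ∈ Finset.range m, (((a:ℝ) + k) + 1)⁻¹ with hSm
  have hApos : (0:ℝ) ≤ (a:ℝ) := Nat.cast_nonneg a
  have hSup : Sm ≤ (m:ℝ) * ((a:ℝ) + 1)⁻¹ := by
    rw [hSm]
    calc ∑ k ∈ Finset.range m, (((a:ℝ) + k) + 1)⁻¹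
        ≤ ∑ k ∈ Finset.range m, ((a:ℝ) + 1)⁻¹ := by
          apply Finset.sum_le_sum
          intro k _
          apply inv_anti₀ (by linarith)
          have : (0:ℝ) ≤ k := Nat.cast_nonneg k
          linarith
      _ = (m:ℝ) * ((a:ℝ) + 1)⁻¹ := by
          rw [Finset.sum_const, Finset.card_range, nsmul_eq_mul]
  have hSlo : (m:ℝ) * ((a:ℝ) + m)⁻¹ ≤ Sm := by
    rw [hSm]
    calc (m:ℝ) * ((a:ℝ) + m)⁻¹
        = ∑ k ∈ Finset.range m, ((a:ℝ) + m)⁻¹ := by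
          rw [Finset.sum_const, Finset.card_range, nsmul_eq_mul]
      _ ≤ ∑ k ∈ Finset.range m, (((a:ℝ) + k) + 1)⁻¹ := by
          apply Finset.sum_le_sum
          intro k hk
          apply inv_anti₀ (by positivity)
          have : (k:ℝ) + 1 ≤ m := by
            have := Finset.mem_range.1 hk
            exact_mod_cast Nat.succ_le_of_lt this
          linarith
  have hcoef : (0:ℝ) ≤ ((b:ℝ)+1) * a := by positivity
  constructor
  · -- lower bound
    have key : 1 + (b:ℝ)*m ≤ 1 + ((b:ℝ)+1) * a * Sm := by
      have h2 : ((b:ℝ)+1) * a * ((m:ℝ) * ((a:ℝ) + m)⁻¹) ≤ ((b:ℝ)+1) * a * Sm :=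
        mul_le_mul_of_nonneg_left hSlo hcoef
      have h3 : ((b:ℝ)+1) * a * ((m:ℝ) * ((a:ℝ) + m)⁻¹) = (b:ℝ) * m := by
        rw [hA]
        have hne : (b:ℝ)*m + m ≠ 0 := by positivity
        field_simp
      linarith
    have h4 : ((b:ℝ)+1) * m - ((b:ℝ)+1) * ((m:ℝ)-1) / b ≤ 1 + (b:ℝ)*m := by
      rw [sub_le_iff_le_add]
      rw [show (1:ℝ) + (b:ℝ)*m + ((b:ℝ)+1) * ((m:ℝ)-1) / b
          = ((1 + (b:ℝ)*m) * b + ((b:ℝ)+1) * ((m:ℝ)-1)) / b by field_simp,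
        le_div_iff₀ hB0]
      nlinarith
    linarith
  · -- upper bound
    have h2 : ((b:ℝ)+1) * a * Sm ≤ ((b:ℝ)+1) * a * ((m:ℝ) * ((a:ℝ) + 1)⁻¹) :=
      mul_le_mul_of_nonneg_left hSup hcoef
    have h3 : ((b:ℝ)+1) * a * ((m:ℝ) * ((a:ℝ) + 1)⁻¹) ≤ ((b:ℝ)+1) * m - 1 := by
      rw [hA]
      have hpos : (0:ℝ) < (b:ℝ)*m + 1 := by positivity
      rw [show ((b:ℝ)+1) * ((b:ℝ)*m) * ((m:ℝ) * ((b:ℝ)*m + 1)⁻¹)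
          = (((b:ℝ)+1) * ((b:ℝ)*m) * (m:ℝ)) / ((b:ℝ)*m + 1) by ring,
        div_le_iff₀ hpos]
      nlinarith
    linarith

lemma tau_identity (b m : ℕ) (t : ℝ) (ht : 1 < t) :
    1 - (1 - t⁻¹) ^ ((b+1)*m) - ((b:ℝ)+1) * ((1 - t⁻¹) ^ (b*m) - (1 - t⁻¹) ^ ((b+1)*m))
      = (b:ℝ) * ∑ k ∈ Finset.range m, ∑ j ∈ Finset.range (b*m + k), (1 - t⁻¹)^j * (t^2)⁻¹
        - ∑ k ∈ Finset.range (b*m), ∑ j ∈ Finset.range k, (1 - t⁻¹)^j * (t^2)⁻¹ := by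
  have htne : t ≠ 0 := ne_of_gt (lt_trans one_pos ht)
  set F : ℝ := 1 - t⁻¹ with hF
  have geo : ∀ K : ℕ, 1 - F ^ K = t⁻¹ * ∑ j ∈ Finset.range K, F ^ j := by
    intro K
    linear_combination geom_sum_mul F K
  have hexp : (b+1)*m = b*m + m := by ring
  rw [hexp]
  have key1 : 1 - F ^ (b*m + m) - ((b:ℝ)+1) * (F ^ (b*m) - F ^ (b*m + m))
      = t⁻¹ * (∑ j ∈ Finset.range (b*m), F^j
          - (b:ℝ) * ∑ j ∈ Finset.range m, F^(b*m + j)) := by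
    have e1 : 1 - F ^ (b*m + m) - ((b:ℝ)+1) * (F ^ (b*m) - F ^ (b*m + m))
        = (1 - F^(b*m)) - (b:ℝ) * (F^(b*m) * (1 - F^m)) := by
      rw [pow_add]; ring
    rw [e1, geo (b*m), geo m]
    simp_rw [pow_add]
    rw [← Finset.mul_sum]
    ring
  have key2 : ∑ j ∈ Finset.range (b*m), F^j - (b:ℝ) * ∑ j ∈ Finset.range m, F^(b*m + j)
      = (b:ℝ) * ∑ k ∈ Finset.range m, (1 - F^(b*m + k))
        - ∑ k ∈ Finset.range (b*m), (1 - F^k) := by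
    rw [Finset.sum_sub_distrib, Finset.sum_sub_distrib]
    simp only [Finset.sum_const, Finset.card_range, nsmul_eq_mul, mul_one]
    push_cast
    ring
  rw [key1, key2]
  simp_rw [geo]
  simp_rw [← Finset.sum_mul, ← Finset.mul_sum, pow_two, mul_inv]
  ring

lemma measure_secondMax_le {Ω : Type*} [MeasurableSpace Ω] (P : Measure Ω)
    [IsProbabilityMeasure P] (b : ℕ) (hb : 1 ≤ b) (Mi : Fin (b+1) → Ω → ℝ)
    (hMi : ∀ i, Measurable (Mi i)) (x : ℝ) (d : ℝ≥0∞)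
    (hu : ∀ u : Finset (Fin (b+1)), P (⋂ i ∈ u, {ω | Mi i ω ≤ x}) = d ^ u.card) :
    P {ω | secondMax (fun i => Mi i ω) ≤ x}
      = d ^ (b+1) + (b+1) * (d ^ b - d ^ (b+1)) := by
  have hn2 : 2 ≤ b + 1 := by omega
  set C : Fin (b+1) → Set Ω := fun i => {ω | Mi i ω ≤ x} with hC
  have hCm : ∀ i, MeasurableSet (C i) := fun i => measurableSet_le (hMi i) measurable_const
  set B : Fin (b+1) → Set Ω := fun i => ⋂ i' ∈ Finset.univ.erase i, C i' with hB
  have hBm : ∀ i, MeasurableSet (B i) :=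
    fun i => MeasurableSet.iInter fun i' => MeasurableSet.iInter fun _ => hCm i'
  set Tset : Set Ω := ⋂ i ∈ (Finset.univ : Finset (Fin (b+1))), C i with hT
  have hTm : MeasurableSet Tset :=
    MeasurableSet.iInter fun i' => MeasurableSet.iInter fun _ => hCm i'
  have hTsub : ∀ i, Tset ⊆ B i := by
    intro i ω hω
    simp only [hT, Set.mem_iInter] at hω
    simp only [hB, Set.mem_iInter]
    intro i' _
    exact hω i' (Finset.mem_univ _)
  have hTC : ∀ i, Tset ⊆ C i := by
    intro i ω hω
    simp only [hT, Set.mem_iInter] at hω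
    exact hω i (Finset.mem_univ _)
  have hBC : ∀ i, B i ∩ C i = Tset := by
    intro i
    ext ω
    simp only [hB, hT, Set.mem_inter_iff, Set.mem_iInter, Finset.mem_erase, Finset.mem_univ]
    constructor
    · rintro ⟨h1, h2⟩ i' _
      rcases eq_or_ne i' i with rfl | hne
      · exact h2
      · exact h1 i' ⟨hne, trivial⟩
    · intro h
      exact ⟨fun i' _ => h i' trivial, h i trivial⟩
  -- decomposition of the event
  have hdecomp : {ω | secondMax (fun i => Mi i ω) ≤ x} = Tset ∪ ⋃ i, (B i \ C i) := by
    ext ω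
    rw [Set.mem_setOf_eq, secondMax_le_iff hn2]
    constructor
    · rintro ⟨i, hi⟩
      have hωB : ω ∈ B i := by
        simp only [hB, Set.mem_iInter, Finset.mem_erase]
        rintro i' ⟨hne, -⟩
        exact hi i' hne
      by_cases hωC : ω ∈ C i
      · left
        simp only [hT, Set.mem_iInter]
        intro i' _
        rcases eq_or_ne i' i with rfl | hne
        · exact hωC
        · exact hi i' hne
      · exact Or.inr (Set.mem_iUnion.2 ⟨i, hωB, hωC⟩)
    · rintro (h | h)
      · refine ⟨⟨0, by omega⟩, fun j _ => ?_⟩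
        simp only [hT, Set.mem_iInter] at h
        exact h j (Finset.mem_univ _)
      · obtain ⟨i, hωB, -⟩ := Set.mem_iUnion.1 h
        refine ⟨i, fun j hj => ?_⟩
        simp only [hB, Set.mem_iInter, Finset.mem_erase] at hωB
        exact hωB j ⟨hj, Finset.mem_univ _⟩
  have hd1 : Disjoint Tset (⋃ i, (B i \ C i)) := by
    rw [Set.disjoint_left]
    intro ω hωT hωU
    obtain ⟨i, -, hωC⟩ := Set.mem_iUnion.1 hωU
    exact hωC (hTC i hωT)
  have hd2 : Pairwise (Function.onFun Disjoint fun i => B i \ C i) := by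
    intro i j hij
    rw [Function.onFun, Set.disjoint_left]
    rintro ω ⟨hωB, hωC⟩ ⟨hωB', -⟩
    apply hωC
    simp only [hB, Set.mem_iInter, Finset.mem_erase] at hωB'
    exact hωB' i ⟨hij, Finset.mem_univ _⟩
  have hPB : ∀ i, P (B i) = d ^ b := by
    intro i
    have := hu (Finset.univ.erase i)
    rwa [Finset.card_erase_of_mem (Finset.mem_univ _), Finset.card_univ, Fintype.card_fin,
      Nat.add_sub_cancel] at this
  have hPT : P Tset = d ^ (b + 1) := by
    have := hu Finset.univ
    rwa [Finset.card_univ, Fintype.card_fin] at this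
  have hPdiff : ∀ i, P (B i \ C i) = d ^ b - d ^ (b + 1) := by
    intro i
    have h1 : P (B i ∩ C i) + P (B i \ C i) = P (B i) := measure_inter_add_diff _ (hCm i)
    rw [hBC i, hPT, hPB i] at h1
    exact ENNReal.eq_sub_of_add_eq (by rw [← hPT]; exact measure_ne_top P _)
      (by rw [add_comm] at h1; exact h1)
  rw [hdecomp, measure_union hd1 (MeasurableSet.iUnion fun i => (hBm i).diff (hCm i)),
    measure_iUnion hd2 (fun i => (hBm i).diff (hCm i)), hPT, tsum_fintype]
  simp only [hPdiff]
  rw [Finset.sum_const, Finset.card_univ, Fintype.card_fin, nsmul_eq_mul]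
  norm_cast

lemma core {Ω : Type*} [MeasurableSpace Ω] (P : Measure Ω) [IsProbabilityMeasure P]
    (b m : ℕ) (hb : 1 ≤ b) (hm : 1 ≤ m)
    (Mi : Fin (b+1) → Ω → ℝ) (hMi : ∀ i, Measurable (Mi i))
    (hae : ∀ᵐ ω ∂P, 1 ≤ secondMax (fun i => Mi i ω))
    (hu : ∀ (x : ℝ) (u : Finset (Fin (b+1))),
      P (⋂ i ∈ u, {ω | Mi i ω ≤ x}) = (ER (Set.Iic x) ^ m) ^ u.card) :
    (∫ ω, secondMax (fun i => Mi i ω) ∂P)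
      = 1 + ((b:ℝ) * ∑ k ∈ Finset.range m, Hsum (b*m + k)
          - ∑ k ∈ Finset.range (b*m), Hsum k) := by
  have hm0 : m ≠ 0 := by omega
  have hb0 : b ≠ 0 := by omega
  have hn2 : 2 ≤ b + 1 := by omega
  have hSmeas : Measurable (fun ω => secondMax (fun i => Mi i ω)) := by
    have hrw : (fun ω => secondMax (fun i => Mi i ω))
        = fun ω => (Finset.univ.offDiag).sup' (offDiag_nonempty hn2)
            (fun p : Fin (b+1) × Fin (b+1) => min (Mi p.1 ω) (Mi p.2 ω)) := by
      funext ω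
      exact secondMax_eq_sup' hn2 _
    rw [hrw]
    exact measurable_sup' _ _ _ (fun p => (hMi p.1).min (hMi p.2))
  have hS0 : 0 ≤ᵐ[P] (fun ω => secondMax (fun i => Mi i ω)) :=
    hae.mono fun ω h => le_trans zero_le_one h
  have hPle : ∀ x : ℝ, P {ω | secondMax (fun i => Mi i ω) ≤ x}
      = (ER (Set.Iic x) ^ m) ^ (b+1)
        + (b+1) * ((ER (Set.Iic x) ^ m) ^ b - (ER (Set.Iic x) ^ m) ^ (b+1)) :=
    fun x => measure_secondMax_le P b hb Mi hMi x _ (hu x)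
  have htail : ∀ t : ℝ, P {ω | t < secondMax (fun i => Mi i ω)}
      = 1 - P {ω | secondMax (fun i => Mi i ω) ≤ t} := by
    intro t
    have hcompl : {ω | t < secondMax (fun i => Mi i ω)}
        = {ω | secondMax (fun i => Mi i ω) ≤ t}ᶜ := by
      ext ω; simp [not_le]
    rw [hcompl, measure_compl (measurableSet_le hSmeas measurable_const)
      (measure_ne_top P _), measure_univ]
  have piece1 : ∫⁻ t in Set.Ioc (0:ℝ) 1, P {ω | t < secondMax (fun i => Mi i ω)} = 1 := by
    rw [setLIntegral_congr_fun_ae measurableSet_Ioc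
      (g := fun _ => (1:ℝ≥0∞)) ?_]
    · simp [Real.volume_Ioc]
    · filter_upwards with t ht
      rw [htail t, hPle t, ER_Iic_of_le ht.2]
      rw [zero_pow hm0, zero_pow hb0, zero_pow (by omega : b + 1 ≠ 0)]
      simp
  set τ : ℝ → ℝ := fun t => 1 - (1 - t⁻¹) ^ ((b+1)*m)
      - ((b:ℝ)+1) * ((1 - t⁻¹) ^ (b*m) - (1 - t⁻¹) ^ ((b+1)*m)) with hτdef
  have hkey : ∀ t : ℝ, t ∈ Set.Ioi (1:ℝ) →
      P {ω | t < secondMax (fun i => Mi i ω)} = ENNReal.ofReal (τ t) ∧ 0 ≤ τ t := by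
    intro t ht
    have ht1 : (1:ℝ) < t := ht
    have ht0 : (0:ℝ) < t := lt_trans one_pos ht1
    have hGnn : (0:ℝ) ≤ 1 - t⁻¹ := by
      have : t⁻¹ ≤ 1 := by
        rw [inv_le_one_iff₀]; right; exact le_of_lt ht1
      linarith
    have hGle1 : 1 - t⁻¹ ≤ 1 := by
      have : 0 < t⁻¹ := inv_pos.2 ht0
      linarith
    have hER : ER (Set.Iic t) = ENNReal.ofReal (1 - t⁻¹) := by
      rw [ER_Iic (le_of_lt ht1), one_div]
    have hofpow : ∀ K : ℕ, (ER (Set.Iic t) ^ m) ^ K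
        = ENNReal.ofReal ((1 - t⁻¹) ^ (K * m)) := by
      intro K
      rw [hER, ← ENNReal.ofReal_pow hGnn, ← ENNReal.ofReal_pow (pow_nonneg hGnn m),
        ← pow_mul, Nat.mul_comm m K]
    have hmono : (1 - t⁻¹) ^ ((b+1)*m) ≤ (1 - t⁻¹) ^ (b*m) :=
      pow_le_pow_of_le_one hGnn hGle1 (Nat.mul_le_mul_right m (Nat.le_succ b))
    have hsubnn : (0:ℝ) ≤ (1 - t⁻¹) ^ (b*m) - (1 - t⁻¹) ^ ((b+1)*m) := by linarith
    set g : ℝ := (1 - t⁻¹) ^ ((b+1)*m)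
        + ((b:ℝ)+1) * ((1 - t⁻¹) ^ (b*m) - (1 - t⁻¹) ^ ((b+1)*m)) with hgdef
    have hg0 : 0 ≤ g := by
      have h1 : (0:ℝ) ≤ (1 - t⁻¹) ^ ((b+1)*m) := pow_nonneg hGnn _
      have h2 : (0:ℝ) ≤ ((b:ℝ)+1) := by positivity
      have h3 := mul_nonneg h2 hsubnn
      rw [hgdef]
      linarith
    have hPS : P {ω | secondMax (fun i => Mi i ω) ≤ t} = ENNReal.ofReal g := by
      rw [hPle t, hofpow (b+1), hofpow b]
      rw [← ENNReal.ofReal_sub _ (pow_nonneg hGnn _)]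
      have hco : ((b:ℝ≥0∞) + 1) = ENNReal.ofReal ((b:ℝ)+1) := by
        rw [ENNReal.ofReal_add (Nat.cast_nonneg b) zero_le_one, ENNReal.ofReal_natCast,
          ENNReal.ofReal_one]
      rw [hco, ← ENNReal.ofReal_mul (by positivity)]
      rw [← ENNReal.ofReal_add (pow_nonneg hGnn _) (by positivity)]
    have hg1 : g ≤ 1 := by
      have h1 : g = (P {ω | secondMax (fun i => Mi i ω) ≤ t}).toReal := by
        rw [hPS, ENNReal.toReal_ofReal hg0]
      rw [h1]
      have h2 := prob_le_one (μ := P) (s := {ω | secondMax (fun i => Mi i ω) ≤ t})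
      simpa using ENNReal.toReal_mono ENNReal.one_ne_top h2
    have hτg : τ t = 1 - g := by simp only [hτdef, hgdef]; ring
    constructor
    · rw [htail t, hPS, hτg, ENNReal.ofReal_sub _ hg0, ENNReal.ofReal_one]
    · rw [hτg]; linarith
  have hdisj : Disjoint (Set.Ioc (0:ℝ) 1) (Set.Ioi 1) := by
    rw [Set.disjoint_left]
    rintro t ⟨-, h1⟩ h2
    exact absurd (Set.mem_Ioi.1 h2) (not_lt.2 h1)
  set Ψ : ℝ → ℝ := fun t => (b:ℝ) * ∑ k ∈ Finset.range m, ∑ j ∈ Finset.range (b*m+k),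
      (1-t⁻¹)^j * (t^2)⁻¹
      - ∑ k ∈ Finset.range (b*m), ∑ j ∈ Finset.range k, (1-t⁻¹)^j * (t^2)⁻¹ with hΨdef
  have hpieceint : ∀ (s : Finset ℕ) (g : ℕ → ℕ), IntegrableOn
      (fun t : ℝ => ∑ k ∈ s, ∑ j ∈ Finset.range (g k), (1-t⁻¹)^j * (t^2)⁻¹)
      (Set.Ioi 1) volume := by
    intro s g
    apply integrable_finset_sum
    intro k _
    apply integrable_finset_sum
    intro j _
    exact integrableOn_psi j
  have hΨint : IntegrableOn Ψ (Set.Ioi 1) volume := by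
    apply Integrable.sub
    · exact Integrable.const_mul (hpieceint (Finset.range m) (fun k => b*m+k)) _
    · exact hpieceint (Finset.range (b*m)) (fun k => k)
  have hτΨ : Set.EqOn τ Ψ (Set.Ioi 1) := by
    intro t ht
    simp only [hτdef, hΨdef]
    exact tau_identity b m t ht
  have hτint : IntegrableOn τ (Set.Ioi 1) volume :=
    hΨint.congr_fun (fun t ht => (hτΨ ht).symm) measurableSet_Ioi
  have hτnn : 0 ≤ᵐ[volume.restrict (Set.Ioi 1)] τ := by
    filter_upwards [ae_restrict_mem measurableSet_Ioi] with t ht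
    exact (hkey t ht).2
  have hin : ∀ (K : ℕ), ∫ t in Set.Ioi (1:ℝ),
      ∑ j ∈ Finset.range K, (1-t⁻¹)^j * (t^2)⁻¹ = Hsum K := by
    intro K
    rw [integral_finset_sum _ (fun j _ => integrableOn_psi j)]
    unfold Hsum
    exact Finset.sum_congr rfl fun j _ => integral_psi j
  have hval : ∫ t in Set.Ioi (1:ℝ), τ t
      = (b:ℝ) * ∑ k ∈ Finset.range m, Hsum (b*m + k)
          - ∑ k ∈ Finset.range (b*m), Hsum k := by
    rw [setIntegral_congr_fun measurableSet_Ioi hτΨ]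
    simp only [hΨdef]
    rw [integral_sub (Integrable.const_mul (hpieceint (Finset.range m) (fun k => b*m+k)) _)
      (hpieceint (Finset.range (b*m)) (fun k => k))]
    rw [integral_const_mul]
    rw [integral_finset_sum _ (fun k _ => integrable_finset_sum _ fun j _ => integrableOn_psi j)]
    rw [integral_finset_sum _ (fun k _ => integrable_finset_sum _ fun j _ => integrableOn_psi j)]
    congr 1
    · congr 1
      exact Finset.sum_congr rfl fun k _ => hin _
    · exact Finset.sum_congr rfl fun k _ => hin _
  have hD0 : 0 ≤ (b:ℝ) * ∑ k ∈ Finset.range m, Hsum (b*m + k)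
      - ∑ k ∈ Finset.range (b*m), Hsum k := by
    rw [← hval]
    exact integral_nonneg_of_ae hτnn
  have hcongr2 : ∫⁻ t in Set.Ioi (1:ℝ), P {ω | t < secondMax (fun i => Mi i ω)}
      = ∫⁻ t in Set.Ioi (1:ℝ), ENNReal.ofReal (τ t) := by
    apply setLIntegral_congr_fun_ae measurableSet_Ioi
    filter_upwards with t ht
    exact (hkey t ht).1
  rw [integral_eq_lintegral_of_nonneg_ae hS0 hSmeas.aestronglyMeasurable]
  rw [lintegral_eq_lintegral_meas_lt P hS0 hSmeas.aemeasurable]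
  rw [show Set.Ioi (0:ℝ) = Set.Ioc 0 1 ∪ Set.Ioi 1 from
    (Set.Ioc_union_Ioi_eq_Ioi zero_le_one).symm]
  rw [lintegral_union measurableSet_Ioi hdisj]
  rw [piece1, hcongr2, ← ofReal_integral_eq_lintegral_ofReal hτint hτnn, hval]
  rw [← ENNReal.ofReal_one, ← ENNReal.ofReal_add zero_le_one hD0,
    ENNReal.toReal_ofReal (by linarith)]

/-- with `(v_{ij})` i.i.d. from `ER`, `M_i := max_j v_{ij}` and `v_{(2),(1)}`
the second-largest of `M₁, …, M_n`, one has `nm − n(m−1)/(n−1) ≤ E[v_{(2),(1)}] ≤ nm`. -/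
theorem expected_second_highest_favorite {Ω : Type*} [MeasurableSpace Ω] (P : Measure Ω)
    [IsProbabilityMeasure P] (n m : ℕ) (hn : 2 ≤ n) (hm : 1 ≤ m)
    (v : Fin n × Fin m → Ω → ℝ) (hvmeas : ∀ q, Measurable (v q))
    (hindep : iIndepFun v P)
    (hlaw : ∀ q, Measure.map (v q) P = ER) :
    (n : ℝ) * m - n * ((m : ℝ) - 1) / ((n : ℝ) - 1) ≤
        (∫ ω, secondMax (fun i : Fin n => ⨆ j : Fin m, v (i, j) ω) ∂P) ∧
      (∫ ω, secondMax (fun i : Fin n => ⨆ j : Fin m, v (i, j) ω) ∂P) ≤ (n : ℝ) * m := by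
  obtain ⟨b, rfl⟩ : ∃ b, n = b + 1 := ⟨n - 1, by omega⟩
  have hb : 1 ≤ b := by omega
  have hm0 : m ≠ 0 := by omega
  haveI : Nonempty (Fin m) := ⟨⟨0, by omega⟩⟩
  -- law of a single coordinate
  have hpre : ∀ (q : Fin (b+1) × Fin m) (x : ℝ),
      P (v q ⁻¹' Set.Iic x) = ER (Set.Iic x) := by
    intro q x
    rw [← Measure.map_apply (hvmeas q) measurableSet_Iic, hlaw q]
  -- product rule for arbitrary finite intersections
  have hprod : ∀ (A : Finset (Fin (b+1) × Fin m)) (x : ℝ),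
      P (⋂ q ∈ A, v q ⁻¹' Set.Iic x) = ER (Set.Iic x) ^ A.card := by
    intro A x
    rw [hindep.measure_inter_preimage_eq_mul A (sets := fun _ => Set.Iic x)
      (fun q _ => measurableSet_Iic)]
    rw [Finset.prod_congr rfl (fun q _ => hpre q x), Finset.prod_const]
  -- the law hypothesis of `core`
  have hu : ∀ (x : ℝ) (u : Finset (Fin (b+1))),
      P (⋂ i ∈ u, {ω | (⨆ j : Fin m, v (i, j) ω) ≤ x}) = (ER (Set.Iic x) ^ m) ^ u.card := by
    intro x u
    have hset : (⋂ i ∈ u, {ω | (⨆ j : Fin m, v (i, j) ω) ≤ x})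
        = ⋂ q ∈ u ×ˢ (Finset.univ : Finset (Fin m)), v q ⁻¹' Set.Iic x := by
      ext ω
      simp only [Set.mem_iInter, Set.mem_setOf_eq, Set.mem_preimage, Set.mem_Iic,
        Finset.mem_product, Finset.mem_univ, and_true]
      constructor
      · rintro h ⟨i, j⟩ hq
        exact le_trans (le_ciSup (f := fun j : Fin m => v (i, j) ω) (Set.Finite.bddAbove (Set.finite_range _)) j) (h i hq)
      · intro h i hi
        exact ciSup_le fun j => h (i, j) hi
    rw [hset, hprod, Finset.card_product, Finset.card_univ, Fintype.card_fin,
      show u.card * m = m * u.card from Nat.mul_comm _ _, pow_mul]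
  -- a.s. lower bound
  have hae : ∀ᵐ ω ∂P, 1 ≤ secondMax (fun i : Fin (b+1) => ⨆ j : Fin m, v (i, j) ω) := by
    have h1 : ∀ q : Fin (b+1) × Fin m, ∀ᵐ ω ∂P, 1 ≤ v q ω := by
      intro q
      rw [ae_iff]
      have hset : {ω | ¬ 1 ≤ v q ω} = v q ⁻¹' Set.Iio 1 := by
        ext ω; simp [not_le]
      rw [hset, ← Measure.map_apply (hvmeas q) measurableSet_Iio, hlaw q]
      exact measure_mono_null Set.Iio_subset_Iic_self (ER_Iic_of_le le_rfl)
    filter_upwards [(ae_all_iff).2 h1] with ω hω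
    have hMi1 : ∀ i : Fin (b+1), (1:ℝ) ≤ ⨆ j : Fin m, v (i, j) ω := by
      intro i
      exact le_trans (hω (i, Classical.arbitrary (Fin m)))
        (le_ciSup (f := fun j : Fin m => v (i, j) ω)
          (Set.Finite.bddAbove (Set.finite_range _)) (Classical.arbitrary (Fin m)))
    have hne : (⟨0, by omega⟩ : Fin (b+1)) ≠ ⟨1, by omega⟩ := by
      intro h
      have := congrArg Fin.val h
      simp at this
    exact le_trans (le_min (hMi1 _) (hMi1 _))
      (le_secondMax (by omega) (fun i : Fin (b+1) => ⨆ j : Fin m, v (i, j) ω) hne)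
  have hE := core P b m hb hm (fun i ω => ⨆ j : Fin m, v (i, j) ω)
    (fun i => by
      show Measurable (fun ω => ⨆ j : Fin m, v (i, j) ω)
      have hrw : (fun ω => ⨆ j : Fin m, v (i, j) ω)
          = fun ω => Finset.univ.sup' Finset.univ_nonempty (fun j : Fin m => v (i, j) ω) := by
        funext ω
        rw [Finset.sup'_univ_eq_ciSup]
      rw [hrw]
      exact measurable_sup' _ _ _ (fun j => hvmeas (i, j)))
    hae hu
  rw [hE]
  obtain ⟨hlo, hhi⟩ := arith_bounds b m hb hm
  constructor
  · push_cast
    rw [show (b:ℝ) + 1 - 1 = (b:ℝ) from by ring]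
    convert hlo using 2 <;> push_cast <;> ring
  · push_cast
    convert hhi using 2 <;> push_cast <;> ring
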